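/- Let A be a synaptic algebra of finite type in which the projections form a complete orthomodular lattice P. Then P is a modular lattice: for all projections e, f, g with e ≤ g, (e ∨ f) ∧ g = e ∨ (f ∧ g). -/
import Mathlib


open Filter Topology

/-- The order-unit norm associated with an order relation `le` on a real algebra:
`‖a‖ = inf {λ > 0 : −λ ≤ a ≤ λ}`. -/
noncomputable def ouNorm {R : Type*} [Ring R] [Algebra ℝ R] (le : R → R → Prop) (a : R) : ℝ :=
  sInf {l : ℝ | 0 < l ∧ le (algebraMap ℝ R (-l)) a ∧ le a (algebraMap ℝ R l)}

/-- A synaptic algebra: a real linear subspace `A` (containing `1`) of a unital associative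
algebra `R` over `ℝ` (a complex algebra is in particular a real algebra), equipped with a
partial order making it an Archimedean partially ordered real linear space with order unit `1`,
and satisfying axioms SA1–SA8.  The square root (SA5) and the carrier (SA6) are bundled as
data together with their defining properties. -/
structure SynapticAlgebra (R : Type*) [Ring R] [Algebra ℝ R] where
  A : Submodule ℝ R
  one_mem : (1 : R) ∈ A
  /-- the synaptic order (meaningful on elements of `A`) -/
  le : R → R → Prop
  -- SA1 : Archimedean partially ordered real linear space with order unit 1
  le_refl : ∀ a ∈ A, le a a
  le_antisymm : ∀ a ∈ A, ∀ b ∈ A, le a b → le b a → a = b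
  le_trans : ∀ a ∈ A, ∀ b ∈ A, ∀ c ∈ A, le a b → le b c → le a c
  add_le_add_right : ∀ a ∈ A, ∀ b ∈ A, ∀ c ∈ A, le a b → le (a + c) (b + c)
  smul_nonneg : ∀ r : ℝ, 0 ≤ r → ∀ a ∈ A, le 0 a → le 0 (r • a)
  arch : ∀ a ∈ A, ∀ b ∈ A, (∀ n : ℕ, le ((n : ℝ) • a) b) → le a 0
  one_order_unit : ∀ a ∈ A, ∃ n : ℕ, le a ((n : ℝ) • (1 : R))
  zero_ne_one : (0 : R) ≠ 1
  -- SA2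
  sq_mem : ∀ a ∈ A, a * a ∈ A
  sq_nn : ∀ a ∈ A, le 0 (a * a)
  -- SA3
  quad_mem : ∀ a ∈ A, ∀ b ∈ A, a * b * a ∈ A
  quad_nn : ∀ a ∈ A, ∀ b ∈ A, le 0 a → le 0 b → le 0 (a * b * a)
  -- SA4
  quad_zero : ∀ a ∈ A, ∀ b ∈ A, le 0 b → a * b * a = 0 → a * b = 0 ∧ b * a = 0
  -- SA5 : square roots
  sqrt : R → R
  sqrt_mem : ∀ a ∈ A, le 0 a → sqrt a ∈ A
  sqrt_nn : ∀ a ∈ A, le 0 a → le 0 (sqrt a)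
  sqrt_sq : ∀ a ∈ A, le 0 a → sqrt a * sqrt a = a
  sqrt_bicomm : ∀ a ∈ A, le 0 a → ∀ b ∈ A, a * b = b * a → sqrt a * b = b * sqrt a
  sqrt_unique : ∀ a ∈ A, le 0 a → ∀ b ∈ A, le 0 b → b * b = a →
    (∀ c ∈ A, a * c = c * a → b * c = c * b) → b = sqrt a
  -- SA6 : carriers
  carr : R → R
  carr_mem : ∀ a ∈ A, carr a ∈ A
  carr_idem : ∀ a ∈ A, carr a * carr a = carr a
  carr_spec : ∀ a ∈ A, ∀ b ∈ A, (a * b = 0 ↔ carr a * b = 0)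
  -- SA7
  inv_exists : ∀ a ∈ A, le 1 a → ∃ b ∈ A, a * b = 1 ∧ b * a = 1
  -- SA8
  comm_closed : ∀ a ∈ A, ∀ b ∈ A, ∀ f : ℕ → R, (∀ n, f n ∈ A) →
    (∀ n, le (f n) (f (n + 1))) → (∀ m n, f m * f n = f n * f m) →
    (∀ n, f n * b = b * f n) →
    Filter.Tendsto (fun n => ouNorm le (a - f n)) Filter.atTop (nhds 0) →
    a * b = b * a

namespace SynapticAlgebra

variable {R : Type*} [Ring R] [Algebra ℝ R] (S : SynapticAlgebra R)

/-- `|a| := (a²)^{1/2}`. -/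
def absval (a : R) : R := S.sqrt (a * a)

/-- The positive part `a⁺ := (|a| + a)/2`. -/
noncomputable def pospart (a : R) : R := (2⁻¹ : ℝ) • (S.absval a + a)

/-- The spectral resolution `p_{a,λ} := 1 − ((a − λ)⁺)°`. -/
noncomputable def specProj (a : R) (l : ℝ) : R :=
  1 - S.carr (S.pospart (a - algebraMap ℝ R l))

/-- The spectral order: `a ≤ₛ b` iff `p_{b,λ} ≤ p_{a,λ}` for all real `λ`. -/
noncomputable def specLE (a b : R) : Prop :=
  ∀ l : ℝ, S.le (S.specProj b l) (S.specProj a l)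

/-- Projections of the synaptic algebra. -/
def IsProj (p : R) : Prop := p ∈ S.A ∧ p * p = p

/-- The set `E = {e ∈ A : 0 ≤ e ≤ 1}` of effects. -/
def effects : Set R := {e | e ∈ S.A ∧ S.le 0 e ∧ S.le e 1}

/-- `p` is the infimum of the set `T` in the orthomodular lattice `P` of projections. -/
def IsProjInf (p : R) (T : Set R) : Prop :=
  S.IsProj p ∧ (∀ q ∈ T, S.le p q) ∧ ∀ r, S.IsProj r → (∀ q ∈ T, S.le r q) → S.le r p

/-- `p` is the supremum of the set `T` in the orthomodular lattice `P` of projections. -/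
def IsProjSup (p : R) (T : Set R) : Prop :=
  S.IsProj p ∧ (∀ q ∈ T, S.le q p) ∧ ∀ r, S.IsProj r → (∀ q ∈ T, S.le q r) → S.le p r

/-- A Banach (norm-complete) synaptic algebra: every Cauchy sequence in `A`
(w.r.t. the order-unit norm) converges in norm to an element of `A`. -/
noncomputable def IsBanach : Prop :=
  ∀ f : ℕ → R, (∀ n, f n ∈ S.A) →
    (∀ ε : ℝ, 0 < ε → ∃ N : ℕ, ∀ m ≥ N, ∀ n ≥ N, ouNorm S.le (f m - f n) < ε) →
    ∃ a ∈ S.A, Filter.Tendsto (fun n => ouNorm S.le (a - f n)) Filter.atTop (nhds 0)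

/-- The `λ`-eigenprojection `d_{a,λ} := 1 − (a − λ)°`. -/
noncomputable def eigenProj (a : R) (l : ℝ) : R := 1 - S.carr (a - algebraMap ℝ R l)

/-- The bicommutant `CC(a)` (within `A`). -/
def Bicomm (a : R) : Set R :=
  {b | b ∈ S.A ∧ ∀ c ∈ S.A, a * c = c * a → b * c = c * b}

/-- Projections `p` and `q` are exchanged by a symmetry (`s² = 1`, `sps = q`). -/
def ExchBySymm (p q : R) : Prop := ∃ s ∈ S.A, s * s = 1 ∧ s * p * s = q

/-- The dimension equivalence on projections: a finite chain of projections, consecutive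
ones exchanged by symmetries. -/
def DimEquiv (p q : R) : Prop :=
  ∃ (n : ℕ) (c : ℕ → R), c 0 = p ∧ c n = q ∧ (∀ i ≤ n, S.IsProj (c i)) ∧
    ∀ i < n, S.ExchBySymm (c i) (c (i + 1))

/-- `A` is of finite type iff every projection is finite. -/
def FiniteType : Prop :=
  ∀ p, S.IsProj p → ∀ q, S.IsProj q → S.DimEquiv q p → S.le q p → q = p

/-- The projection lattice `P` is a complete orthomodular lattice: every set of projections
has an infimum and a supremum in `P`. -/
def ProjComplete : Prop :=
  ∀ T : Set R, (∀ p ∈ T, S.IsProj p) →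
    (∃ q, S.IsProjInf q T) ∧ (∃ q, S.IsProjSup q T)

/-- A bounded resolution of identity with bound `K`. -/
def IsBoundedResId (p : ℝ → R) (K : ℝ) : Prop :=
  0 ≤ K ∧ (∀ l, S.IsProj (p l)) ∧
  (∀ l, l < -K → p l = 0) ∧ (∀ l, K ≤ l → p l = 1) ∧
  (∀ l l', l ≤ l' → S.le (p l) (p l')) ∧
  (∀ l, S.IsProjInf (p l) {x | ∃ l' > l, x = p l'})

end SynapticAlgebra

/-- `c` is a regular involution on the subset `T` of the poset `(T, le')`. -/
def IsRegInvPoset {R : Type*} (le' : R → R → Prop) (T : Set R) (c : R → R) : Prop :=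
  (∀ a ∈ T, c a ∈ T) ∧ (∀ a ∈ T, c (c a) = a) ∧
  (∀ a ∈ T, ∀ b ∈ T, le' a b → le' (c b) (c a)) ∧
  (∀ a ∈ T, ∀ b ∈ T, le' a (c a) → le' b (c b) → le' a (c b))

/-- `(T, le', c, 0, 1)` is a Kleene poset: a bounded poset with a regular involution. -/
def IsKleene {R : Type*} [Zero R] [One R] (le' : R → R → Prop) (T : Set R) (c : R → R) : Prop :=
  IsRegInvPoset le' T c ∧ (0 : R) ∈ T ∧ (1 : R) ∈ T ∧ ∀ a ∈ T, le' 0 a ∧ le' a 1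

/-- Every pair of elements of `T` has an infimum and a supremum in `(T, le')`. -/
def HasBinSupInf {R : Type*} (le' : R → R → Prop) (T : Set R) : Prop :=
  ∀ a ∈ T, ∀ b ∈ T,
    (∃ m ∈ T, le' m a ∧ le' m b ∧ ∀ x ∈ T, le' x a → le' x b → le' x m) ∧
    (∃ j ∈ T, le' a j ∧ le' b j ∧ ∀ x ∈ T, le' a x → le' b x → le' j x)

namespace SynapticAlgebra

variable {R : Type*} [Ring R] [Algebra ℝ R] (S : SynapticAlgebra R)

/-! ### Basic order lemmas -/

lemma sub_nonneg_of_le' {a b : R} (ha : a ∈ S.A) (hb : b ∈ S.A) (h : S.le a b) :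
    S.le 0 (b - a) := by
  have h2 := S.add_le_add_right a ha b hb (-a) (neg_mem ha) h
  have e1 : a + -a = 0 := add_neg_cancel a
  have e2 : b + -a = b - a := by rw [sub_eq_add_neg]
  rwa [e1, e2] at h2

lemma le_of_sub_nonneg' {a b : R} (ha : a ∈ S.A) (hb : b ∈ S.A) (h : S.le 0 (b - a)) :
    S.le a b := by
  have h2 := S.add_le_add_right 0 (zero_mem _) (b - a) (sub_mem hb ha) a ha h
  rwa [zero_add, sub_add_cancel] at h2

/-! ### Zero-symmetry via SA4 -/

lemma zsymm {a b : R} (ha : a ∈ S.A) (hb : b ∈ S.A) (hpos : S.le 0 a) (h : a * b = 0) :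
    b * a = 0 := by
  have h3 : b * a * b = 0 := by rw [mul_assoc, h, mul_zero]
  exact (S.quad_zero b hb a ha hpos h3).1

lemma zsymm' {a b : R} (ha : a ∈ S.A) (hb : b ∈ S.A) (hpos : S.le 0 a) (h : b * a = 0) :
    a * b = 0 := by
  have h3 : b * a * b = 0 := by rw [h, zero_mul]
  exact (S.quad_zero b hb a ha hpos h3).2

/-! ### Carrier lemmas -/

lemma mul_carr {a : R} (ha : a ∈ S.A) : a * S.carr a = a := by
  have hcm := S.carr_mem a ha
  have h1 : S.carr a * (1 - S.carr a) = 0 := by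
    rw [mul_sub, mul_one, S.carr_idem a ha, sub_self]
  have h2 : a * (1 - S.carr a) = 0 :=
    (S.carr_spec a ha _ (sub_mem S.one_mem hcm)).mpr h1
  rw [mul_sub, mul_one] at h2
  exact (sub_eq_zero.mp h2).symm

lemma carr_mul {a : R} (ha : a ∈ S.A) (hpos : S.le 0 a) : S.carr a * a = a := by
  have hcm := S.carr_mem a ha
  have h2 : a * (1 - S.carr a) = 0 := by
    rw [mul_sub, mul_one, S.mul_carr ha, sub_self]
  have h3 : (1 - S.carr a) * a = 0 :=
    S.zsymm ha (sub_mem S.one_mem hcm) hpos h2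
  rw [sub_mul, one_mul] at h3
  exact (sub_eq_zero.mp h3).symm

/-! ### Projection lemmas -/

lemma proj_nonneg {p : R} (hp : S.IsProj p) : S.le 0 p := by
  have h := S.sq_nn p hp.1; rwa [hp.2] at h

lemma proj_compl {p : R} (hp : S.IsProj p) : S.IsProj (1 - p) := by
  refine ⟨sub_mem S.one_mem hp.1, ?_⟩
  have e : (1 - p) * (1 - p) = 1 - p - (p - p * p) := by noncomm_ring
  rw [e, hp.2]
  abel

lemma carr_proj {a : R} (ha : a ∈ S.A) : S.IsProj (S.carr a) :=
  ⟨S.carr_mem a ha, S.carr_idem a ha⟩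

lemma le_of_mul {p q : R} (hp : S.IsProj p) (hq : S.IsProj q)
    (h1 : p * q = p) (h2 : q * p = p) : S.le p q := by
  have hproj : S.IsProj (q - p) := by
    refine ⟨sub_mem hq.1 hp.1, ?_⟩
    have e : (q - p) * (q - p) = q * q - q * p - (p * q - p * p) := by noncomm_ring
    rw [e, hq.2, hp.2, h1, h2]
    abel
  exact S.le_of_sub_nonneg' hp.1 hq.1 (S.proj_nonneg hproj)

lemma mul_of_le {p q : R} (hp : S.IsProj p) (hq : S.IsProj q) (h : S.le p q) :
    p * q = p ∧ q * p = p := by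
  have hq' := S.proj_compl hq
  have hd : S.le 0 (q - p) := S.sub_nonneg_of_le' hp.1 hq.1 h
  have hdm : q - p ∈ S.A := sub_mem hq.1 hp.1
  have hu1mem : (1-q) * p * (1-q) ∈ S.A := S.quad_mem _ hq'.1 p hp.1
  have hu2mem : (1-q) * (q - p) * (1-q) ∈ S.A := S.quad_mem _ hq'.1 _ hdm
  have hu1 : S.le 0 ((1-q) * p * (1-q)) :=
    S.quad_nn _ hq'.1 p hp.1 (S.proj_nonneg hq') (S.proj_nonneg hp)
  have hu2 : S.le 0 ((1-q) * (q-p) * (1-q)) :=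
    S.quad_nn _ hq'.1 _ hdm (S.proj_nonneg hq') hd
  have hqq : (1-q) * q = 0 := by rw [sub_mul, one_mul, hq.2, sub_self]
  have hsum : (1-q) * (q-p) * (1-q) + (1-q) * p * (1-q) = 0 := by
    have e : (1-q) * (q-p) * (1-q) + (1-q) * p * (1-q) = ((1-q) * q) * (1-q) := by
      noncomm_ring
    rw [e, hqq, zero_mul]
  have h10 : S.le ((1-q) * p * (1-q)) 0 := by
    have h3 := S.add_le_add_right 0 (zero_mem _) _ hu2mem _ hu1mem hu2
    rwa [zero_add, hsum] at h3
  have h1z : (1-q) * p * (1-q) = 0 :=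
    S.le_antisymm _ hu1mem 0 (zero_mem _) h10 hu1
  have hz := S.quad_zero (1-q) hq'.1 p hp.1 (S.proj_nonneg hp) h1z
  constructor
  · have := hz.2
    rw [mul_sub, mul_one] at this
    exact (sub_eq_zero.mp this).symm
  · have := hz.1
    rw [sub_mul, one_mul] at this
    exact (sub_eq_zero.mp this).symm

/-! ### Conjugation by a symmetry -/

lemma conj_conj {s x : R} (hss : s * s = 1) : s * (s * x * s) * s = x := by
  have e : s * (s * x * s) * s = (s * s) * x * (s * s) := by noncomm_ring
  rw [e, hss, one_mul, mul_one]

lemma carr_conj {s w : R} (hs : s ∈ S.A) (hss : s * s = 1) (hw : w ∈ S.A) :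
    s * S.carr w * s = S.carr (s * w * s) := by
  have hsws : s * w * s ∈ S.A := S.quad_mem s hs w hw
  have hπm : s * S.carr w * s ∈ S.A := S.quad_mem s hs _ (S.carr_mem w hw)
  have hπidem : (s * S.carr w * s) * (s * S.carr w * s) = s * S.carr w * s := by
    have e : (s * S.carr w * s) * (s * S.carr w * s)
        = s * (S.carr w * (s * s) * S.carr w) * s := by noncomm_ring
    rw [e, hss, mul_one, S.carr_idem w hw]
  have hπnn : S.le 0 (s * S.carr w * s) := by
    have h := S.sq_nn _ hπm; rwa [hπidem] at h
  have key : ∀ b, b ∈ S.A → ((s * w * s) * b = 0 ↔ (s * S.carr w * s) * b = 0) := by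
    intro b hb
    have hsbs : s * b * s ∈ S.A := S.quad_mem s hs b hb
    have e1 : s * ((s * w * s) * b) * s = (s*s) * (w * (s * b * s)) := by noncomm_ring
    have e2 : s * ((s * S.carr w * s) * b) * s = (s*s) * (S.carr w * (s * b * s)) := by
      noncomm_ring
    have e3 : ∀ x : R, s * (s * x * s) * s = x := fun x => conj_conj hss
    constructor
    · intro h
      have h1 : w * (s * b * s) = 0 := by
        have := congrArg (fun x => s * x * s) h
        simp only [mul_zero, zero_mul] at this
        rw [e1, hss, one_mul] at this
        exact this
      have h2 : S.carr w * (s * b * s) = 0 := (S.carr_spec w hw _ hsbs).mp h1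
      have h3 : s * ((s * S.carr w * s) * b) * s = 0 := by
        rw [e2, hss, one_mul, h2]
      have := congrArg (fun x => s * x * s) h3
      simp only [mul_zero, zero_mul] at this
      rwa [e3] at this
    · intro h
      have h1 : S.carr w * (s * b * s) = 0 := by
        have := congrArg (fun x => s * x * s) h
        simp only [mul_zero, zero_mul] at this
        rw [e2, hss, one_mul] at this
        exact this
      have h2 : w * (s * b * s) = 0 := (S.carr_spec w hw _ hsbs).mpr h1
      have h3 : s * ((s * w * s) * b) * s = 0 := by
        rw [e1, hss, one_mul, h2]
      have := congrArg (fun x => s * x * s) h3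
      simp only [mul_zero, zero_mul] at this
      rwa [e3] at this
  set κ := S.carr (s * w * s) with hκdef
  have hκm : κ ∈ S.A := S.carr_mem _ hsws
  have hκnn : S.le 0 κ := S.proj_nonneg (S.carr_proj hsws)
  -- π ⋅ (1 - κ) = 0
  have hswsκ : (s * w * s) * (1 - κ) = 0 := by
    rw [mul_sub, mul_one, S.mul_carr hsws, sub_self]
  have hπκ : (s * S.carr w * s) * (1 - κ) = 0 :=
    (key _ (sub_mem S.one_mem hκm)).mp hswsκ
  -- κ ⋅ (1 - π) = 0
  have hππ : (s * S.carr w * s) * (1 - (s * S.carr w * s)) = 0 := by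
    rw [mul_sub, mul_one, hπidem, sub_self]
  have hswsπ : (s * w * s) * (1 - (s * S.carr w * s)) = 0 :=
    (key _ (sub_mem S.one_mem hπm)).mpr hππ
  have hκπ : κ * (1 - (s * S.carr w * s)) = 0 :=
    (S.carr_spec _ hsws _ (sub_mem S.one_mem hπm)).mp hswsπ
  -- conclude
  have h1 : (1 - κ) * (s * S.carr w * s) = 0 :=
    S.zsymm hπm (sub_mem S.one_mem hκm) hπnn hπκ
  have h2 : s * S.carr w * s = κ * (s * S.carr w * s) := by
    rw [sub_mul, one_mul] at h1
    exact (sub_eq_zero.mp h1)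
  have h3 : κ = κ * (s * S.carr w * s) := by
    rw [mul_sub, mul_one] at hκπ
    exact (sub_eq_zero.mp hκπ)
  rw [h2, ← h3]

/-! ### The carrier of the Sasaki-type element `α(1−β)α` is `α − α∧β` -/

lemma carr_sasaki {α β m : R} (hα : S.IsProj α) (hβ : S.IsProj β)
    (hm : S.IsProjInf m ({α, β} : Set R)) :
    S.carr (α * (1 - β) * α) = α - m := by
  have hβ' := S.proj_compl hβ
  have hwm : α * (1 - β) * α ∈ S.A := S.quad_mem α hα.1 _ hβ'.1
  have hwnn : S.le 0 (α * (1 - β) * α) :=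
    S.quad_nn α hα.1 _ hβ'.1 (S.proj_nonneg hα) (S.proj_nonneg hβ')
  set w := α * (1 - β) * α with hwdef
  set u := S.carr w with hudef
  have hum : u ∈ S.A := S.carr_mem w hwm
  have huproj : S.IsProj u := S.carr_proj hwm
  have hunn : S.le 0 u := S.proj_nonneg huproj
  have hαα : α * (1 - α) = 0 := by rw [mul_sub, mul_one, hα.2, sub_self]
  have hw1 : w * (1 - α) = 0 := by
    have e : α * (1 - β) * α * (1 - α) = (α * (1 - β)) * (α * (1 - α)) := by noncomm_ring
    rw [hwdef, e, hαα, mul_zero]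
  have hu1 : u * (1 - α) = 0 := (S.carr_spec w hwm _ (sub_mem S.one_mem hα.1)).mp hw1
  have huα : u * α = u := by
    rw [mul_sub, mul_one] at hu1; exact (sub_eq_zero.mp hu1).symm
  have hαu : α * u = u := by
    have h2 : (1 - α) * u = 0 := S.zsymm hum (sub_mem S.one_mem hα.1) hunn hu1
    rw [sub_mul, one_mul] at h2; exact (sub_eq_zero.mp h2).symm
  have hrm : α - u ∈ S.A := sub_mem hα.1 hum
  have hrproj : S.IsProj (α - u) := by
    refine ⟨hrm, ?_⟩
    have e : (α - u) * (α - u) = α * α - α * u - u * α + u * u := by noncomm_ring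
    rw [e, hα.2, hαu, huα, S.carr_idem w hwm]; abel
  have huw : u * w = w := S.carr_mul hwm hwnn
  have hαw : α * w = w := by
    have e : α * (α * (1 - β) * α) = (α * α) * (1 - β) * α := by noncomm_ring
    rw [hwdef, e, hα.2]
  have hrw : (α - u) * w = 0 := by rw [sub_mul, hαw, huw, sub_self]
  have hrα : (α - u) * α = α - u := by rw [sub_mul, hα.2, huα]
  have hαr : α * (α - u) = α - u := by rw [mul_sub, hα.2, hαu]
  have hrq : (α - u) * (1 - β) * α = 0 := by
    have e : (α - u) * (α * (1 - β) * α) = (((α - u) * α) * (1 - β)) * α := by noncomm_ring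
    rw [hwdef] at hrw
    rw [e, hrα] at hrw
    exact hrw
  have hrqr : (α - u) * (1 - β) * (α - u) = 0 := by
    have e2 : (α - u) * (1 - β) * (α - u) = (α - u) * (1 - β) * (α * (α - u)) := by
      rw [hαr]
    have e3 : (α - u) * (1 - β) * (α * (α - u)) = ((α - u) * (1 - β) * α) * (α - u) := by
      noncomm_ring
    rw [e2, e3, hrq, zero_mul]
  have hz := S.quad_zero (α - u) hrm (1 - β) hβ'.1 (S.proj_nonneg hβ') hrqr
  have hrβ : (α - u) * β = α - u := by
    have := hz.1; rw [mul_sub, mul_one] at this; exact (sub_eq_zero.mp this).symm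
  have hβr : β * (α - u) = α - u := by
    have := hz.2; rw [sub_mul, one_mul] at this; exact (sub_eq_zero.mp this).symm
  -- α - u ≤ m
  have hrlem : S.le (α - u) m := by
    refine hm.2.2 (α - u) hrproj ?_
    intro t ht
    rcases ht with rfl | rfl
    · exact S.le_of_mul hrproj hα hrα hαr
    · exact S.le_of_mul hrproj hβ hrβ hβr
  -- m ≤ α - u
  have hmα := S.mul_of_le hm.1 hα (hm.2.1 α (Set.mem_insert α {β}))
  have hmβ := S.mul_of_le hm.1 hβ (hm.2.1 β (Set.mem_insert_of_mem α rfl))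
  have hmw : m * w = 0 := by
    have e : m * (α * (1 - β) * α) = ((m * α) * (1 - β)) * α := by noncomm_ring
    have hmq : m * (1 - β) = 0 := by rw [mul_sub, mul_one, hmβ.1, sub_self]
    rw [hwdef, e, hmα.1, hmq, zero_mul]
  have hwm0 : w * m = 0 := S.zsymm' hwm hm.1.1 hwnn hmw
  have hum0 : u * m = 0 := (S.carr_spec w hwm m hm.1.1).mp hwm0
  have hmu0 : m * u = 0 := S.zsymm hum hm.1.1 hunn hum0
  have hmler : S.le m (α - u) := by
    refine S.le_of_mul hm.1 hrproj ?_ ?_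
    · rw [mul_sub, hmα.1, hmu0, sub_zero]
    · rw [sub_mul, hmα.2, hum0, sub_zero]
  have heq : α - u = m := S.le_antisymm _ hrm m hm.1.1 hrlem hmler
  have : u = α - m := by rw [← heq]; abel
  rw [hudef] at this; exact this

/-! ### Exchange by a symmetry (Foulis–Pulmannová) -/

lemma exchange {p q m m' : R} (hp : S.IsProj p) (hq : S.IsProj q)
    (hm : S.IsProjInf m ({p, q} : Set R))
    (hm' : S.IsProjInf m' ({1 - q, 1 - p} : Set R)) :
    ∃ s ∈ S.A, s * s = 1 ∧ s * ((1 - q) - m') * s = p - m ∧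
      s * (p - m) * s = (1 - q) - m' := by
  have hq' := S.proj_compl hq
  have hp' := S.proj_compl hp
  have hcm : p - q ∈ S.A := sub_mem hp.1 hq.1
  have ham : (p - q) * (p - q) ∈ S.A := S.sq_mem _ hcm
  have hann : S.le 0 ((p - q) * (p - q)) := S.sq_nn _ hcm
  set a := (p - q) * (p - q) with hadef
  set h := S.sqrt a with hhdef
  have hhm : h ∈ S.A := S.sqrt_mem a ham hann
  have hh2 : h * h = a := S.sqrt_sq a ham hann
  -- commutation identities
  have hpa : p * a = p * (1 - q) * p := by
    have e1 : p * ((p - q) * (p - q)) = p*p*p - p*p*q - p*q*p + p*(q*q) := by noncomm_ring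
    have e2 : p * (1 - q) * p = p*p - p*q*p := by noncomm_ring
    rw [hadef, e1, e2]; simp only [hp.2, hq.2]; abel
  have hap : a * p = p * (1 - q) * p := by
    have e1 : ((p - q) * (p - q)) * p = p*p*p - p*q*p - q*(p*p) + (q*q)*p := by noncomm_ring
    have e2 : p * (1 - q) * p = p*p - p*q*p := by noncomm_ring
    rw [hadef, e1, e2]; simp only [hp.2, hq.2]; abel
  have hapc : a * p = p * a := by rw [hap, hpa]
  have hacc : a * (p - q) = (p - q) * a := by rw [hadef]; noncomm_ring
  have hhp : h * p = p * h := S.sqrt_bicomm a ham hann p hp.1 hapc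
  have hhc : h * (p - q) = (p - q) * h := S.sqrt_bicomm a ham hann _ hcm hacc
  -- positive and negative parts
  set cp := (2⁻¹ : ℝ) • (h + (p - q)) with hcpdef
  set cm := (2⁻¹ : ℝ) • (h - (p - q)) with hcmdef
  have hcpm : cp ∈ S.A := S.A.smul_mem _ (add_mem hhm hcm)
  have hcmm : cm ∈ S.A := S.A.smul_mem _ (sub_mem hhm hcm)
  have hsum : cp + cm = h := by
    have e : (h + (p - q)) + (h - (p - q)) = (2 : ℝ) • h := by rw [two_smul]; abel
    rw [hcpdef, hcmdef, ← smul_add, e, smul_smul]; norm_num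
  have hdiff : cp - cm = p - q := by
    have e : (h + (p - q)) - (h - (p - q)) = (2 : ℝ) • (p - q) := by rw [two_smul]; abel
    rw [hcpdef, hcmdef, ← smul_sub, e, smul_smul]; norm_num
  have hmp0 : cm * cp = 0 := by
    have e0 : (h - (p - q)) * (h + (p - q))
        = h * h + h * (p - q) - (p - q) * h - (p - q) * (p - q) := by noncomm_ring
    have e1 : (h - (p - q)) * (h + (p - q)) = 0 := by
      rw [e0, hh2, hhc, ← hadef]; abel
    rw [hcmdef, hcpdef, smul_mul_assoc, mul_smul_comm, e1, smul_zero, smul_zero]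
  have hpm0 : cp * cm = 0 := by
    have e0 : (h + (p - q)) * (h - (p - q))
        = h * h - h * (p - q) + (p - q) * h - (p - q) * (p - q) := by noncomm_ring
    have e1 : (h + (p - q)) * (h - (p - q)) = 0 := by
      rw [e0, hh2, hhc, ← hadef]; abel
    rw [hcpdef, hcmdef, smul_mul_assoc, mul_smul_comm, e1, smul_zero, smul_zero]
  -- the symmetry
  set n := S.carr cm with hndef
  have hnm : n ∈ S.A := S.carr_mem cm hcmm
  have hnproj : S.IsProj n := S.carr_proj hcmm
  have hnidem := hnproj.2
  have hncp : n * cp = 0 := (S.carr_spec cm hcmm cp hcpm).mp hmp0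
  have hcpn : cp * n = 0 := S.zsymm hnm hcpm (S.proj_nonneg hnproj) hncp
  have hcmn : cm * n = cm := S.mul_carr hcmm
  have hncm : n * cm = cm := by
    have h1 : cm * (1 - n) = 0 := by rw [mul_sub, mul_one, hcmn, sub_self]
    have h2 : (1 - n) * cm = 0 :=
      S.zsymm' (sub_mem S.one_mem hnm) hcmm (S.proj_nonneg (S.proj_compl hnproj)) h1
    rw [sub_mul, one_mul] at h2; exact (sub_eq_zero.mp h2).symm
  set s := 1 - n - n with hsdef
  have hsm : s ∈ S.A := sub_mem (sub_mem S.one_mem hnm) hnm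
  have hss : s * s = 1 := by
    have e : (1 - n - n) * (1 - n - n)
        = 1 - n - n - n - n + (n * n + n * n + n * n + n * n) := by noncomm_ring
    rw [hsdef, e, hnidem]; abel
  have hnc : n * (p - q) = -cm := by
    rw [← hdiff, mul_sub, hncp, hncm, zero_sub]
  have hcn : (p - q) * n = -cm := by
    rw [← hdiff, sub_mul, hcpn, hcmn, zero_sub]
  have haux : (p - q) + cm + cm = h := by
    rw [← hsum, ← hdiff]; abel
  have hsc : s * (p - q) = h := by
    have e : (1 - n - n) * (p - q) = (p - q) - n * (p - q) - n * (p - q) := by noncomm_ring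
    rw [hsdef, e, hnc, sub_neg_eq_add, sub_neg_eq_add, haux]
  have hcs : (p - q) * s = h := by
    have e : (p - q) * (1 - n - n) = (p - q) - (p - q) * n - (p - q) * n := by noncomm_ring
    rw [hsdef, e, hcn, sub_neg_eq_add, sub_neg_eq_add, haux]
  -- the two carriers
  have hQ : S.carr ((1 - q) * p * (1 - q)) = (1 - q) - m' := by
    have hc := S.carr_sasaki hq' hp' hm'
    rwa [sub_sub_cancel] at hc
  have hP : S.carr (p * (1 - q) * p) = p - m := S.carr_sasaki hp hq hm
  -- conjugation identity
  have hI1 : (p - q) * p * (p - q) = (1 - q) * p * (1 - q) := by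
    have eL : (p - q) * p * (p - q) = (p*p)*p - (p*p)*q - q*(p*p) + q*p*q := by noncomm_ring
    have eR : (1 - q) * p * (1 - q) = p - p*q - q*p + q*p*q := by noncomm_ring
    rw [eL, eR]; simp only [hp.2]
  have hconj : s * ((1 - q) * p * (1 - q)) * s = p * (1 - q) * p := by
    have eA : s * ((p - q) * p * (p - q)) * s = (s * (p - q)) * p * ((p - q) * s) := by
      noncomm_ring
    calc s * ((1 - q) * p * (1 - q)) * s
        = s * ((p - q) * p * (p - q)) * s := by rw [hI1]
      _ = (s * (p - q)) * p * ((p - q) * s) := eA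
      _ = h * p * h := by rw [hsc, hcs]
      _ = p * (h * h) := by rw [hhp, mul_assoc]
      _ = p * a := by rw [hh2]
      _ = p * (1 - q) * p := hpa
  -- assemble
  have hQm : (1 - q) * p * (1 - q) ∈ S.A := S.quad_mem _ hq'.1 p hp.1
  have hfin1 : s * ((1 - q) - m') * s = p - m := by
    rw [← hQ, S.carr_conj hsm hss hQm, hconj, hP]
  refine ⟨s, hsm, hss, hfin1, ?_⟩
  rw [← hfin1, conj_conj hss]

/-! ### Further order helpers -/

lemma le_flip {a b : R} (ha : a ∈ S.A) (hb : b ∈ S.A) (h : S.le a b) :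
    S.le (1 - b) (1 - a) := by
  have h2 := S.add_le_add_right a ha b hb (1 - a - b)
    (sub_mem (sub_mem S.one_mem ha) hb) h
  have e1 : a + (1 - a - b) = 1 - b := by abel
  have e2 : b + (1 - a - b) = 1 - a := by abel
  rwa [e1, e2] at h2

lemma proj_diff {p q : R} (hp : S.IsProj p) (hq : S.IsProj q) (h : S.le p q) :
    S.IsProj (q - p) := by
  obtain ⟨h1, h2⟩ := S.mul_of_le hp hq h
  refine ⟨sub_mem hq.1 hp.1, ?_⟩
  have e : (q - p) * (q - p) = q * q - q * p - (p * q - p * p) := by noncomm_ring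
  rw [e, hq.2, hp.2, h1, h2]; abel

lemma compl_inf {p q j : R} (hp : S.IsProj p) (hq : S.IsProj q)
    (hj : S.IsProjSup j ({p, q} : Set R)) :
    S.IsProjInf (1 - j) ({1 - q, 1 - p} : Set R) := by
  have hj' := S.proj_compl hj.1
  have hpj : S.le p j := hj.2.1 p (Set.mem_insert p {q})
  have hqj : S.le q j := hj.2.1 q (Set.mem_insert_of_mem p rfl)
  refine ⟨hj', ?_, ?_⟩
  · intro t ht
    rcases ht with rfl | rfl
    · exact S.le_flip hq.1 hj.1.1 hqj
    · exact S.le_flip hp.1 hj.1.1 hpj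
  · intro r hr hrle
    have hrq : S.le r (1 - q) := hrle _ (Set.mem_insert _ _)
    have hrp : S.le r (1 - p) := hrle _ (Set.mem_insert_of_mem _ rfl)
    have hqr : S.le q (1 - r) := by
      have := S.le_flip hr.1 (S.proj_compl hq).1 hrq
      rwa [sub_sub_cancel] at this
    have hpr : S.le p (1 - r) := by
      have := S.le_flip hr.1 (S.proj_compl hp).1 hrp
      rwa [sub_sub_cancel] at this
    have hjr : S.le j (1 - r) := by
      refine hj.2.2 (1 - r) (S.proj_compl hr) ?_
      intro t ht
      rcases ht with rfl | rfl
      · exact hpr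
      · exact hqr
    have := S.le_flip hj.1.1 (S.proj_compl hr).1 hjr
    rwa [sub_sub_cancel] at this

end SynapticAlgebra
/-- If `A` is of finite type and `P` is a complete orthomodular lattice,
then `P` is modular: for projections `e ≤ g`, `(e ∨ f) ∧ g = e ∨ (f ∧ g)`. -/
theorem finite_type_modular {R : Type*} [Ring R] [Algebra ℝ R]
    (S : SynapticAlgebra R) (hfin : S.FiniteType) (hcomp : S.ProjComplete)
    (e f g ef efg fg e_fg : R)
    (he : S.IsProj e) (hf : S.IsProj f) (hg : S.IsProj g) (heg : S.le e g)
    (hef : S.IsProjSup ef {e, f}) (hefg : S.IsProjInf efg {ef, g})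
    (hfg : S.IsProjInf fg {f, g}) (he_fg : S.IsProjSup e_fg {e, fg}) :
    efg = e_fg := by
  -- abbreviations
  have hx : S.IsProj efg := hefg.1
  have hy : S.IsProj e_fg := he_fg.1
  have hefP : S.IsProj ef := hef.1
  have hfgP : S.IsProj fg := hfg.1
  have le_e_ef : S.le e ef := hef.2.1 e (Set.mem_insert _ _)
  have le_f_ef : S.le f ef := hef.2.1 f (Set.mem_insert_of_mem _ rfl)
  have le_x_ef : S.le efg ef := hefg.2.1 ef (Set.mem_insert _ _)
  have le_x_g : S.le efg g := hefg.2.1 g (Set.mem_insert_of_mem _ rfl)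
  have le_fg_f : S.le fg f := hfg.2.1 f (Set.mem_insert _ _)
  have le_fg_g : S.le fg g := hfg.2.1 g (Set.mem_insert_of_mem _ rfl)
  have le_e_y : S.le e e_fg := he_fg.2.1 e (Set.mem_insert _ _)
  have le_fg_y : S.le fg e_fg := he_fg.2.1 fg (Set.mem_insert_of_mem _ rfl)
  have le_fg_ef : S.le fg ef := S.le_trans fg hfgP.1 f hf.1 ef hefP.1 le_fg_f le_f_ef
  have le_e_x : S.le e efg := by
    refine hefg.2.2 e he ?_
    intro t ht; rcases ht with rfl | rfl
    · exact le_e_ef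
    · exact heg
  have le_fg_x : S.le fg efg := by
    refine hefg.2.2 fg hfgP ?_
    intro t ht; rcases ht with rfl | rfl
    · exact le_fg_ef
    · exact le_fg_g
  have le_y_x : S.le e_fg efg := by
    refine he_fg.2.2 efg hx ?_
    intro t ht; rcases ht with rfl | rfl
    · exact le_e_x
    · exact le_fg_x
  have le_y_g : S.le e_fg g := by
    refine he_fg.2.2 g hg ?_
    intro t ht; rcases ht with rfl | rfl
    · exact heg
    · exact le_fg_g
  have le_y_ef : S.le e_fg ef := by
    refine he_fg.2.2 ef hefP ?_
    intro t ht; rcases ht with rfl | rfl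
    · exact le_e_ef
    · exact le_fg_ef
  -- binary infima and suprema for the pairs (efg, f) and (e_fg, f)
  have hInfx : S.IsProjInf fg ({efg, f} : Set R) := by
    refine ⟨hfgP, ?_, ?_⟩
    · intro t ht; rcases ht with rfl | rfl
      · exact le_fg_x
      · exact le_fg_f
    · intro r hr hrle
      have hrx : S.le r efg := hrle _ (Set.mem_insert _ _)
      have hrf : S.le r f := hrle _ (Set.mem_insert_of_mem _ rfl)
      have hrg : S.le r g := S.le_trans r hr.1 efg hx.1 g hg.1 hrx le_x_g
      refine hfg.2.2 r hr ?_
      intro t ht; rcases ht with rfl | rfl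
      · exact hrf
      · exact hrg
  have hSupx : S.IsProjSup ef ({efg, f} : Set R) := by
    refine ⟨hefP, ?_, ?_⟩
    · intro t ht; rcases ht with rfl | rfl
      · exact le_x_ef
      · exact le_f_ef
    · intro r hr hrle
      have hxr : S.le efg r := hrle _ (Set.mem_insert _ _)
      have hfr : S.le f r := hrle _ (Set.mem_insert_of_mem _ rfl)
      have her : S.le e r := S.le_trans e he.1 efg hx.1 r hr.1 le_e_x hxr
      refine hef.2.2 r hr ?_
      intro t ht; rcases ht with rfl | rfl
      · exact her
      · exact hfr
  have hInfy : S.IsProjInf fg ({e_fg, f} : Set R) := by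
    refine ⟨hfgP, ?_, ?_⟩
    · intro t ht; rcases ht with rfl | rfl
      · exact le_fg_y
      · exact le_fg_f
    · intro r hr hrle
      have hry : S.le r e_fg := hrle _ (Set.mem_insert _ _)
      have hrf : S.le r f := hrle _ (Set.mem_insert_of_mem _ rfl)
      have hrg : S.le r g := S.le_trans r hr.1 e_fg hy.1 g hg.1 hry le_y_g
      refine hfg.2.2 r hr ?_
      intro t ht; rcases ht with rfl | rfl
      · exact hrf
      · exact hrg
  have hSupy : S.IsProjSup ef ({e_fg, f} : Set R) := by
    refine ⟨hefP, ?_, ?_⟩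
    · intro t ht; rcases ht with rfl | rfl
      · exact le_y_ef
      · exact le_f_ef
    · intro r hr hrle
      have hyr : S.le e_fg r := hrle _ (Set.mem_insert _ _)
      have hfr : S.le f r := hrle _ (Set.mem_insert_of_mem _ rfl)
      have her : S.le e r := S.le_trans e he.1 e_fg hy.1 r hr.1 le_e_y hyr
      refine hef.2.2 r hr ?_
      intro t ht; rcases ht with rfl | rfl
      · exact her
      · exact hfr
  -- complements
  have hInf'x : S.IsProjInf (1 - ef) ({1 - f, 1 - efg} : Set R) :=
    S.compl_inf hx hf hSupx
  have hInf'y : S.IsProjInf (1 - ef) ({1 - f, 1 - e_fg} : Set R) :=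
    S.compl_inf hy hf hSupy
  -- the two symmetries
  obtain ⟨s1, hs1m, hs1s, hs1a, hs1b⟩ := S.exchange hx hf hInfx hInf'x
  obtain ⟨s2, hs2m, hs2s, hs2a, hs2b⟩ := S.exchange hy hf hInfy hInf'y
  have hefmf : (1 - f) - (1 - ef) = ef - f := by abel
  rw [hefmf] at hs1a hs2a hs1b hs2b
  -- the three projections in the chain
  have hx0 : S.IsProj (efg - fg) := S.proj_diff hfgP hx le_fg_x
  have hy0 : S.IsProj (e_fg - fg) := S.proj_diff hfgP hy le_fg_y
  have hw0 : S.IsProj (ef - f) := S.proj_diff hf hefP le_f_ef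
  -- y0 ≤ x0
  have le_y0_x0 : S.le (e_fg - fg) (efg - fg) := by
    have h1 : S.le 0 (efg - e_fg) := S.sub_nonneg_of_le' hy.1 hx.1 le_y_x
    have e : (efg - fg) - (e_fg - fg) = efg - e_fg := by abel
    refine S.le_of_sub_nonneg' (sub_mem hy.1 hfgP.1) (sub_mem hx.1 hfgP.1) ?_
    rwa [e]
  -- dimension equivalence of y0 and x0
  have hdim : S.DimEquiv (e_fg - fg) (efg - fg) := by
    refine ⟨2, fun i => if i = 0 then e_fg - fg else if i = 1 then ef - f else efg - fg,
      by norm_num, by norm_num, ?_, ?_⟩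
    · intro i hi
      interval_cases i
      · simpa using hy0
      · simpa using hw0
      · simpa using hx0
    · intro i hi
      interval_cases i
      · refine ⟨s2, hs2m, hs2s, ?_⟩
        simpa using hs2b
      · refine ⟨s1, hs1m, hs1s, ?_⟩
        simpa using hs1a
  -- finiteness concludes
  have heq : e_fg - fg = efg - fg :=
    hfin (efg - fg) hx0 (e_fg - fg) hy0 hdim le_y0_x0
  have : e_fg = efg := sub_left_inj.mp heq
  exact this.symm
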